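/- arXiv:math/0603008 — 2 statements merged into one kernel-verified Lean document; each statement's English description precedes it below -/
import Mathlib

section
/- Let X be a complex Banach space and let 𝓛 = 𝓐 + 𝓗 where 𝓐 and 𝓗 are bounded linear operators on X. Suppose for some integer k ≥ 1 and real numbers γ, δ one has ‖𝓐^k‖ ≤ γ < 1 and ‖𝓗‖ ≤ δ < 1. Set C = Σ_{i=1}^{k} binom(k,i) ‖𝓐‖^{k−i} δ^{i−1}. Then the spectral radius of 𝓛 satisfies R_Sp(𝓛) ≤ (γ + C·δ)^{1/k} (equivalently, when γ > 0, R_Sp(𝓛) ≤ γ^{1/k}(1 + C·δ/γ)^{1/k}). -/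
open scoped ENNReal

/-!
Write `𝓛^k = 𝓐^k + ((𝓐 + 𝓗)^k - 𝓐^k)`. Expanding `(𝓐 + 𝓗)^k` noncommutatively and bounding every
word containing at least one `𝓗` by norms gives `‖(𝓐 + 𝓗)^k - 𝓐^k‖ ≤ (‖𝓐‖ + δ)^k - ‖𝓐‖^k = C δ`,
so `‖𝓛^k‖ ≤ γ + C δ`, and the spectral radius is at most `‖𝓛^k‖^{1/k}`.
-/

theorem add_pow_sub_pow_eq_sum_mul {R : Type*} [CommRing R] (x t : R) (k : ℕ) :
    (x + t) ^ k - x ^ k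
      = (∑ i ∈ Finset.Icc 1 k, (k.choose i : R) * x ^ (k - i) * t ^ (i - 1)) * t := by
  rw [add_comm, add_pow, Finset.range_eq_Ico, Finset.sum_eq_sum_Ico_succ_bot k.succ_pos,
    zero_add, Nat.succ_eq_add_one, Finset.Ico_add_one_right_eq_Icc, Finset.sum_mul]
  simp only [pow_zero, one_mul, Nat.sub_zero, Nat.choose_zero_right, Nat.cast_one, mul_one,
    add_sub_cancel_left]
  refine Finset.sum_congr rfl fun i hi => ?_
  obtain ⟨j, rfl⟩ := Nat.exists_eq_add_of_le' (Finset.mem_Icc.mp hi).1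
  simp only [Nat.add_sub_cancel]
  ring

theorem norm_add_pow_sub_pow_le {R : Type*} [NormedRing R] (a h : R) (n : ℕ) :
    ‖(a + h) ^ n - a ^ n‖ ≤ (‖a‖ + ‖h‖) ^ n - ‖a‖ ^ n := by
  induction n with
  | zero => simp
  | succ n ih =>
    have hdiff : (a + h) ^ (n + 1) - a ^ (n + 1)
        = (a + h) * ((a + h) ^ n - a ^ n) + h * a ^ n := by
      rw [pow_succ', pow_succ']
      noncomm_ring
    have hha : ‖h * a ^ n‖ ≤ ‖h‖ * ‖a‖ ^ n := by
      rcases n.eq_zero_or_pos with rfl | hn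
      · simp
      · exact (norm_mul_le _ _).trans (by gcongr; exact norm_pow_le' a hn)
    have hsum : ‖a + h‖ ≤ ‖a‖ + ‖h‖ := norm_add_le a h
    calc ‖(a + h) ^ (n + 1) - a ^ (n + 1)‖
        ≤ ‖a + h‖ * ‖(a + h) ^ n - a ^ n‖ + ‖h * a ^ n‖ := by
          rw [hdiff]; exact (norm_add_le _ _).trans (by gcongr; exact norm_mul_le _ _)
      _ ≤ (‖a‖ + ‖h‖) * ((‖a‖ + ‖h‖) ^ n - ‖a‖ ^ n) + ‖h‖ * ‖a‖ ^ n := by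
          gcongr
      _ = (‖a‖ + ‖h‖) ^ (n + 1) - ‖a‖ ^ (n + 1) := by ring

/-- `‖1‖ ≤ 1` rather than `NormOneClass A`, which fails for operators on the zero space. -/
theorem spectrum.spectralRadius_le_of_norm_pow_le {𝕜 A : Type*} [NormedField 𝕜] [NormedRing A]
    [NormedAlgebra 𝕜 A] [CompleteSpace A] (h1 : ‖(1 : A)‖ ≤ 1) {a : A} {k : ℕ} (hk : 1 ≤ k)
    {r : ℝ} (ha : ‖a ^ k‖ ≤ r) :
    spectralRadius 𝕜 a ≤ ENNReal.ofReal (r ^ (1 / k : ℝ)) := by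
  obtain ⟨n, rfl⟩ := Nat.exists_eq_add_of_le' hk
  have hexp : (0 : ℝ) ≤ 1 / (n + 1 : ℝ) := by positivity
  have hone : (‖(1 : A)‖₊ : ℝ≥0∞) ^ (1 / (n + 1) : ℝ) ≤ 1 :=
    ENNReal.rpow_le_one (mod_cast h1) hexp
  have hpow : (‖a ^ (n + 1)‖₊ : ℝ≥0∞) ≤ ENNReal.ofReal r := by
    rw [← ENNReal.ofReal_coe_nnreal, coe_nnnorm]
    exact ENNReal.ofReal_le_ofReal ha
  calc spectralRadius 𝕜 a
      ≤ (‖a ^ (n + 1)‖₊ : ℝ≥0∞) ^ (1 / (n + 1) : ℝ) * (‖(1 : A)‖₊ : ℝ≥0∞) ^ (1 / (n + 1) : ℝ) :=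
        spectrum.spectralRadius_le_pow_nnnorm_pow_one_div 𝕜 a n
    _ ≤ ENNReal.ofReal r ^ (1 / (n + 1) : ℝ) := by
        simpa using mul_le_mul' (ENNReal.rpow_le_rpow hpow hexp) hone
    _ = ENNReal.ofReal (r ^ (1 / (n + 1 : ℕ) : ℝ)) := by
        rw [ENNReal.ofReal_rpow_of_nonneg ((norm_nonneg _).trans ha) (by positivity)]
        push_cast; rfl

theorem stmt4_general {X : Type*} [NormedAddCommGroup X] [NormedSpace ℂ X] [CompleteSpace X]
    (A H : X →L[ℂ] X) (k : ℕ) (hk : 1 ≤ k) (γ δ : ℝ)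
    (hA : ‖A ^ k‖ ≤ γ) (hH : ‖H‖ ≤ δ)
    (C : ℝ)
    (hC : C = ∑ i ∈ Finset.Icc 1 k, (k.choose i : ℝ) * ‖A‖ ^ (k - i) * δ ^ (i - 1)) :
    spectralRadius ℂ (A + H) ≤ ENNReal.ofReal ((γ + C * δ) ^ ((1 : ℝ) / k)) := by
  have hperturb : (‖A‖ + ‖H‖) ^ k - ‖A‖ ^ k ≤ C * δ := by
    rw [hC, ← add_pow_sub_pow_eq_sum_mul]
    gcongr
  refine spectrum.spectralRadius_le_of_norm_pow_le ContinuousLinearMap.norm_id_le hk ?_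
  calc ‖(A + H) ^ k‖ = ‖A ^ k + ((A + H) ^ k - A ^ k)‖ := by rw [add_sub_cancel]
    _ ≤ ‖A ^ k‖ + ‖(A + H) ^ k - A ^ k‖ := norm_add_le _ _
    _ ≤ γ + C * δ := add_le_add hA ((norm_add_pow_sub_pow_le A H k).trans hperturb)

/-- Lemma 6.2: if `𝓛 = 𝓐 + 𝓗` with `‖𝓐^k‖ ≤ γ < 1` and `‖𝓗‖ ≤ δ < 1`, and
`C = Σ_{i=1}^k binom(k,i) ‖𝓐‖^{k-i} δ^{i-1}`, then the spectral radius of `𝓛`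
satisfies `R_Sp(𝓛) ≤ (γ + C δ)^{1/k}`. -/
theorem stmt4 {X : Type*} [NormedAddCommGroup X] [NormedSpace ℂ X] [CompleteSpace X]
    (A H : X →L[ℂ] X) (k : ℕ) (hk : 1 ≤ k) (γ δ : ℝ)
    (hA : ‖A ^ k‖ ≤ γ) (hγ : γ < 1) (hH : ‖H‖ ≤ δ) (hδ : δ < 1)
    (C : ℝ)
    (hC : C = ∑ i ∈ Finset.Icc 1 k, (k.choose i : ℝ) * ‖A‖ ^ (k - i) * δ ^ (i - 1)) :
    spectralRadius ℂ (A + H) ≤ ENNReal.ofReal ((γ + C * δ) ^ ((1 : ℝ) / k)) :=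
  stmt4_general A H k hk γ δ hA hH C hC
end

section
/- Let X and Y be complex Banach spaces, let r > 0, and let R be an analytic map from the open ball B(f̂, r) ⊂ X to Y. Let 𝓛 = DR(f̂) denote the Fréchet derivative of R at f̂. Let h ∈ X with ‖h‖ < r and let 0 < ε < 1. Then ‖R(f̂ + εh) − R(f̂) − ε·𝓛h‖ ≤ (ε²/(1−ε)) · sup_{s ∈ ℂ, |s| ≤ 1} ‖R(f̂ + s·h) − R(f̂)‖. -/
/-!
Restrict `R` to the complex line `s ↦ f̂ + s • h`: the map `g s = R (f̂ + s • h) - R f̂` is holomorphic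
on a neighbourhood of the closed unit disc, vanishes at `0` and has derivative `DR(f̂) h` there.
Cauchy's estimates bound its `n`-th Taylor coefficient by `M = sup_{|s| ≤ 1} ‖g s‖`, so the Taylor
remainder after the linear term is at most `M (ε² + ε³ + ⋯) = M ε² / (1 - ε)`.
-/

open Metric Finset

theorem norm_sub_sum_range_le_of_hasSum_of_norm_le_geometric {E : Type*} [NormedAddCommGroup E]
    {f : ℕ → E} {a : E} (hf : HasSum f a) {M q : ℝ} (hq₀ : 0 ≤ q) (hq₁ : q < 1)
    (hfM : ∀ n, ‖f n‖ ≤ M * q ^ n) (k : ℕ) :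
    ‖a - ∑ i ∈ range k, f i‖ ≤ M * q ^ k / (1 - q) := by
  have htail : HasSum (fun n => f (n + k)) (a - ∑ i ∈ range k, f i) :=
    (hasSum_nat_add_iff' k).mpr hf
  have hgeom : HasSum (fun n => M * q ^ k * q ^ n) (M * q ^ k / (1 - q)) := by
    simpa only [div_eq_mul_inv] using (hasSum_geometric_of_lt_one hq₀ hq₁).mul_left (M * q ^ k)
  refine htail.norm_le_of_bounded hgeom fun n => ?_
  calc ‖f (n + k)‖ ≤ M * q ^ (n + k) := hfM _
    _ = M * q ^ k * q ^ n := by ring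

namespace Complex

variable {E : Type*} [NormedAddCommGroup E] [NormedSpace ℂ E] [CompleteSpace E]

theorem norm_taylorTerm_le_of_forall_mem_sphere_norm_le {g : ℂ → E} {c z : ℂ} {ρ M : ℝ}
    (hρ : 0 < ρ) (hg : DiffContOnCl ℂ g (ball c ρ)) (hM : ∀ w ∈ sphere c ρ, ‖g w‖ ≤ M) (n : ℕ) :
    ‖(n.factorial : ℂ)⁻¹ • (z - c) ^ n • iteratedDeriv n g c‖ ≤ M * (‖z - c‖ / ρ) ^ n := by
  have hcauchy := norm_iteratedDeriv_le_of_forall_mem_sphere_norm_le n hρ hg hM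
  have hfac : (0 : ℝ) < n.factorial := by exact_mod_cast n.factorial_pos
  rw [norm_smul, norm_smul, norm_inv, norm_pow, norm_natCast, div_pow]
  calc (n.factorial : ℝ)⁻¹ * (‖z - c‖ ^ n * ‖iteratedDeriv n g c‖)
      ≤ (n.factorial : ℝ)⁻¹ * (‖z - c‖ ^ n * (n.factorial * M / ρ ^ n)) := by gcongr
    _ = M * (‖z - c‖ ^ n / ρ ^ n) := by field_simp

theorem norm_sub_sub_smul_deriv_le {g : ℂ → E} {c z : ℂ} {ρ M : ℝ} (hρ : 0 < ρ)
    (hg : DiffContOnCl ℂ g (ball c ρ)) (hM : ∀ w ∈ sphere c ρ, ‖g w‖ ≤ M)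
    (hz : z ∈ ball c ρ) :
    ‖g z - g c - (z - c) • deriv g c‖ ≤ M * (‖z - c‖ / ρ) ^ 2 / (1 - ‖z - c‖ / ρ) := by
  have hq₁ : ‖z - c‖ / ρ < 1 := by rwa [div_lt_one hρ, ← dist_eq_norm]
  have htaylor := hasSum_taylorSeries_on_ball hg.differentiableOn hz
  convert norm_sub_sum_range_le_of_hasSum_of_norm_le_geometric htaylor (by positivity) hq₁
    (norm_taylorTerm_le_of_forall_mem_sphere_norm_le hρ hg hM) 2 using 2
  simp [sum_range_succ, sub_sub]

end Complex

section LineRestriction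

variable {X Y : Type*} [NormedAddCommGroup X] [NormedSpace ℂ X] [NormedAddCommGroup Y]
  [NormedSpace ℂ Y] {R : X → Y} {x v : X} {r : ℝ}

theorem add_smul_mem_ball_of_norm_le_one (hv : ‖v‖ < r) {s : ℂ} (hs : s ∈ closedBall 0 1) :
    x + s • v ∈ ball x r := by
  rw [mem_closedBall_zero_iff] at hs
  rw [mem_ball_iff_norm, add_sub_cancel_left, norm_smul]
  calc ‖s‖ * ‖v‖ ≤ 1 * ‖v‖ := by gcongr
    _ < r := by rwa [one_mul]

theorem differentiableOn_closedBall_line (hR : AnalyticOnNhd ℂ R (ball x r)) (hv : ‖v‖ < r) :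
    DifferentiableOn ℂ (fun s : ℂ => R (x + s • v) - R x) (closedBall 0 1) := fun s hs =>
  (((hR _ (add_smul_mem_ball_of_norm_le_one hv hs)).differentiableAt.comp s
    (by fun_prop)).sub_const _).differentiableWithinAt

end LineRestriction

theorem stmt7_general {X Y : Type*} [NormedAddCommGroup X] [NormedSpace ℂ X]
    [NormedAddCommGroup Y] [NormedSpace ℂ Y] [CompleteSpace Y]
    (r : ℝ) (fhat : X) (R : X → Y)
    (hR : AnalyticOnNhd ℂ R (Metric.ball fhat r))
    (h : X) (hh : ‖h‖ < r) (ε : ℝ) (hε0 : 0 < ε) (hε1 : ε < 1) :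
    ‖R (fhat + (ε : ℂ) • h) - R fhat - (ε : ℂ) • (fderiv ℂ R fhat h)‖ ≤
      ε ^ 2 / (1 - ε) *
        ⨆ s : Metric.closedBall (0 : ℂ) 1, ‖R (fhat + (s : ℂ) • h) - R fhat‖ := by
  set g : ℂ → Y := fun s => R (fhat + s • h) - R fhat
  have hg := differentiableOn_closedBall_line hR hh
  have hbdd : BddAbove (Set.range fun s : closedBall (0 : ℂ) 1 => ‖g s‖) := by
    simpa only [Set.image_eq_range] using
      (isCompact_closedBall (0 : ℂ) 1).bddAbove_image hg.continuousOn.norm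
  have hderiv : deriv g 0 = fderiv ℂ R fhat h := by
    have hR₀ := (hR fhat (mem_ball_self (by linarith [norm_nonneg h]))).differentiableAt
    exact (hR₀.hasFDerivAt.hasLineDerivAt h).sub_const (R fhat) |>.deriv
  have key := Complex.norm_sub_sub_smul_deriv_le one_pos (hg.diffContOnCl_ball subset_rfl)
    (fun w hw => le_ciSup hbdd ⟨w, sphere_subset_closedBall hw⟩)
    (z := ε) (by simpa [abs_of_pos hε0] using hε1)
  simpa [g, hderiv, abs_of_pos hε0, div_mul_eq_mul_div, mul_comm] using key

/-- Proposition 6.3: a Cauchy-type estimate for an analytic operator `R`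
between complex Banach spaces, analytic on the ball `B(f̂, r)`.  For `‖h‖ < r`
and `0 < ε < 1`, with `𝓛 = DR(f̂)` the Fréchet derivative,
`‖R(f̂+εh) − R(f̂) − ε 𝓛 h‖ ≤ (ε²/(1−ε)) · sup_{|s|≤1} ‖R(f̂+s h) − R(f̂)‖`. -/
theorem stmt7 {X Y : Type*} [NormedAddCommGroup X] [NormedSpace ℂ X] [CompleteSpace X]
    [NormedAddCommGroup Y] [NormedSpace ℂ Y] [CompleteSpace Y]
    (r : ℝ) (hr : 0 < r) (fhat : X) (R : X → Y)
    (hR : AnalyticOnNhd ℂ R (Metric.ball fhat r))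
    (h : X) (hh : ‖h‖ < r) (ε : ℝ) (hε0 : 0 < ε) (hε1 : ε < 1) :
    ‖R (fhat + (ε : ℂ) • h) - R fhat - (ε : ℂ) • (fderiv ℂ R fhat h)‖ ≤
      ε ^ 2 / (1 - ε) *
        ⨆ s : Metric.closedBall (0 : ℂ) 1, ‖R (fhat + (s : ℂ) • h) - R fhat‖ :=
  stmt7_general r fhat R hR h hh ε hε0 hε1
end
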